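/- Let X be a presheaf on Set_s^f and let m ≥ 1. The set Y_m = {y ∈ X m | Fix(y) = 1} is invariant under the action σ • y = X σ⁻¹ y of S_m on X m, and this action restricted to Y_m is free. Moreover, if X satisfies Condition (3), then for every n the map from the canonical lifting of this free action on Y_m to X, sending a class [y, q] (y ∈ Y_m, q : Fin n → Fin m surjective) to X q y ∈ X n, is well defined and injective. -/
import Mathlib


/-- A presheaf on `Set_s^f`: a family of sets `obj n` together with, for every surjection
`f : Fin m → Fin n`, a map `map f : obj n → obj m`, functorially. -/
structure SurjPresheaf where
  obj : ℕ → Type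
  map : ∀ {m n : ℕ} (f : Fin m → Fin n), Function.Surjective f → obj n → obj m
  map_id : ∀ n : ℕ, map (id : Fin n → Fin n) Function.surjective_id = id
  map_comp : ∀ {r m n : ℕ} (f : Fin r → Fin m) (hf : Function.Surjective f)
    (g : Fin m → Fin n) (hg : Function.Surjective g),
    map (g ∘ f) (hg.comp hf) = map f hf ∘ map g hg

/-- `Fix(x) = 1`: the identity is the only permutation `σ` of `Fin n` with `X σ x = x`. -/
def SurjPresheaf.FixTrivial (X : SurjPresheaf) {n : ℕ} (x : X.obj n) : Prop :=
  ∀ σ : Equiv.Perm (Fin n), X.map ⇑σ σ.surjective x = x → σ = 1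

/-- Condition (2): every element is the restriction of an element with trivial fixator. -/
def SurjPresheaf.Cond2 (X : SurjPresheaf) : Prop :=
  ∀ (n : ℕ), 1 ≤ n → ∀ x : X.obj n,
    ∃ (m : ℕ) (_ : 1 ≤ m) (f : Fin n → Fin m) (hf : Function.Surjective f) (y : X.obj m),
      X.map f hf y = x ∧ X.FixTrivial y

/-- Condition (3): elements with trivial fixator having a common restriction differ
by a bijection. -/
def SurjPresheaf.Cond3 (X : SurjPresheaf) : Prop :=
  ∀ (k n m : ℕ), 1 ≤ k → ∀ (f : Fin k → Fin n) (hf : Function.Surjective f)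
    (g : Fin k → Fin m) (hg : Function.Surjective g) (x : X.obj n) (y : X.obj m),
    X.map f hf x = X.map g hg y → X.FixTrivial x → X.FixTrivial y →
    n = m ∧ ∃ σ : Fin n ≃ Fin m, ⇑σ ∘ f = g ∧ X.map ⇑σ σ.surjective y = x

lemma SurjPresheaf.map_congr (X : SurjPresheaf) {m n : ℕ} {f g : Fin m → Fin n}
    (h : f = g) (hf : Function.Surjective f) (hg : Function.Surjective g) (z : X.obj n) :
    X.map f hf z = X.map g hg z := by subst h; rfl

lemma SurjPresheaf.map_map (X : SurjPresheaf) {r m n : ℕ} (f : Fin r → Fin m)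
    (hf : Function.Surjective f) (g : Fin m → Fin n) (hg : Function.Surjective g)
    (z : X.obj n) :
    X.map f hf (X.map g hg z) = X.map (g ∘ f) (hg.comp hf) z :=
  (congrFun (X.map_comp f hf g hg) z).symm

lemma SurjPresheaf.map_perm_mul (X : SurjPresheaf) {n : ℕ} (a b : Equiv.Perm (Fin n))
    (z : X.obj n) :
    X.map ⇑a a.surjective (X.map ⇑b b.surjective z)
      = X.map ⇑(b * a) (b * a).surjective z := by
  rw [X.map_map]
  simp only [Equiv.Perm.coe_mul]

lemma SurjPresheaf.map_perm_one (X : SurjPresheaf) {n : ℕ} (z : X.obj n) :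
    X.map ⇑(1 : Equiv.Perm (Fin n)) (1 : Equiv.Perm (Fin n)).surjective z = z := by
  exact congrFun (X.map_id n) z

lemma SurjPresheaf.map_perm_inv_cancel (X : SurjPresheaf) {n : ℕ} (a : Equiv.Perm (Fin n))
    (z : X.obj n) :
    X.map ⇑a a.surjective (X.map ⇑a⁻¹ a⁻¹.surjective z) = z := by
  rw [X.map_perm_mul, inv_mul_cancel, X.map_perm_one]

lemma SurjPresheaf.map_perm_cancel_inv (X : SurjPresheaf) {n : ℕ} (a : Equiv.Perm (Fin n))
    (z : X.obj n) :
    X.map ⇑a⁻¹ a⁻¹.surjective (X.map ⇑a a.surjective z) = z := by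
  rw [X.map_perm_mul, mul_inv_cancel, X.map_perm_one]

/-- For a presheaf `X` on `Set_s^f` and `m ≥ 1`, the set
`Y_m = {y ∈ X m | Fix(y) = 1}` is invariant under the `S_m`-action `σ • y = X σ⁻¹ y`, and
this action restricted to `Y_m` is free. Moreover, if `X` satisfies Condition (3), then
the map from the canonical lifting of this action to `X`, `[y, q] ↦ X q y`, is well
defined and injective (equality of values corresponds exactly to the identification
`(y, q) ∼ (σ • y, σ ∘ q)`). -/
theorem fixTrivial_part_free_and_canLift_embeds (X : SurjPresheaf) {m : ℕ} (hm : 1 ≤ m) :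
    (∀ (σ : Equiv.Perm (Fin m)) (y : X.obj m), X.FixTrivial y →
        X.FixTrivial (X.map ⇑σ⁻¹ σ⁻¹.surjective y)) ∧
    (∀ (σ : Equiv.Perm (Fin m)) (y : X.obj m), X.FixTrivial y →
        X.map ⇑σ⁻¹ σ⁻¹.surjective y = y → σ = 1) ∧
    (X.Cond3 →
      ∀ (n : ℕ), 1 ≤ n → ∀ (y y' : X.obj m), X.FixTrivial y → X.FixTrivial y' →
        ∀ (q q' : Fin n → Fin m) (hq : Function.Surjective q) (hq' : Function.Surjective q'),
        (X.map q hq y = X.map q' hq' y' ↔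
          ∃ σ : Equiv.Perm (Fin m),
            y' = X.map ⇑σ⁻¹ σ⁻¹.surjective y ∧ q' = ⇑σ ∘ q)) := by
  refine ⟨?_, ?_, ?_⟩
  · -- invariance of Y_m
    intro σ y hy τ hτ
    have h1 : X.map ⇑(σ⁻¹ * τ) (σ⁻¹ * τ).surjective y = X.map ⇑σ⁻¹ σ⁻¹.surjective y := by
      rw [← X.map_perm_mul]; exact hτ
    have h2 : X.map ⇑(σ⁻¹ * τ * σ) (σ⁻¹ * τ * σ).surjective y = y := by
      rw [← X.map_perm_mul, h1, X.map_perm_inv_cancel]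
    have := hy _ h2
    have : σ⁻¹ * τ * σ = 1 := this
    calc τ = σ * (σ⁻¹ * τ * σ) * σ⁻¹ := by group
    _ = 1 := by rw [this]; group
  · -- freeness
    intro σ y hy h
    have := hy _ h
    simpa using congrArg (·⁻¹) this
  · -- embedding
    intro h3 n hn y y' hy hy' q q' hq hq'
    constructor
    · intro heq
      obtain ⟨-, σ, hσq, hσy⟩ := h3 n m m hn q hq q' hq' y y' heq hy hy'
      refine ⟨σ, ?_, hσq.symm⟩
      rw [← hσy, X.map_perm_cancel_inv]
    · rintro ⟨σ, rfl, rfl⟩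
      rw [X.map_map]
      have hc : ⇑σ⁻¹ ∘ (⇑σ ∘ q) = q := by
        ext i; simp
      exact (X.map_congr hc _ hq y).symm
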